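/- arXiv:2509.08021 — 5 statements merged into one kernel-verified Lean document; each statement's English description precedes it below -/
import Mathlib

section
/- For a type-D symmetric 4-spinor Ψ_{ABCD} = Ψ·o_{(A}o_B ι_C ι_{D)} with Ψ ≠ 0, the quotient ψ := −6J/I equals Ψ, where I = Ψ_{ABCD}Ψ^{ABCD} and J = Ψ_{AB}{}^{CD}Ψ_{CD}{}^{EF}Ψ_{EF}{}^{AB}. -/
open Complex Finset

noncomputable section

/-- The symplectic form ε on ℂ², with ε 0 1 = 1. -/
def eps : Fin 2 → Fin 2 → ℂ := fun A B =>
  if A = 0 ∧ B = 1 then 1 else if A = 1 ∧ B = 0 then -1 else 0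

/-- Full symmetrization of a 4-index spinor, weight 1/4!. -/
def sym4 (T : Fin 2 → Fin 2 → Fin 2 → Fin 2 → ℂ) : Fin 2 → Fin 2 → Fin 2 → Fin 2 → ℂ :=
  fun A B C D =>
    (24 : ℂ)⁻¹ * ∑ σ : Equiv.Perm (Fin 4),
      T (![A,B,C,D] (σ 0)) (![A,B,C,D] (σ 1)) (![A,B,C,D] (σ 2)) (![A,B,C,D] (σ 3))

/-- Type-D Weyl spinor Ψ·o_{(A}o_B ι_C ι_{D)}. -/
def typeD (Ψ : ℂ) (o ι : Fin 2 → ℂ) : Fin 2 → Fin 2 → Fin 2 → Fin 2 → ℂ :=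
  sym4 (fun a b c d => Ψ * (o a * o b * ι c * ι d))

/-- Dyad normalization o_A ι^A = 1 (with ι^A = ε^{AB} ι_B). -/
def isDyad (o ι : Fin 2 → ℂ) : Prop :=
  (∑ A : Fin 2, ∑ B : Fin 2, eps A B * o A * ι B) = 1

/-- The quadratic invariant I = Ψ_{ABCD}Ψ^{ABCD}. -/
def quadInv (Ψ : Fin 2 → Fin 2 → Fin 2 → Fin 2 → ℂ) : ℂ :=
  ∑ A : Fin 2, ∑ B : Fin 2, ∑ C : Fin 2, ∑ D : Fin 2,
  ∑ A' : Fin 2, ∑ B' : Fin 2, ∑ C' : Fin 2, ∑ D' : Fin 2,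
    eps A A' * eps B B' * eps C C' * eps D D' * Ψ A B C D * Ψ A' B' C' D'

/-- Ψ_{AB}{}^{CD} (last two indices raised with ε). -/
def mixed (Ψ : Fin 2 → Fin 2 → Fin 2 → Fin 2 → ℂ) : Fin 2 → Fin 2 → Fin 2 → Fin 2 → ℂ :=
  fun A B C D => ∑ C' : Fin 2, ∑ D' : Fin 2, eps C C' * eps D D' * Ψ A B C' D'

/-- The cubic invariant J = Ψ_{AB}{}^{CD}Ψ_{CD}{}^{EF}Ψ_{EF}{}^{AB}. -/
def cubicInv (Ψ : Fin 2 → Fin 2 → Fin 2 → Fin 2 → ℂ) : ℂ :=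
  ∑ A : Fin 2, ∑ B : Fin 2, ∑ C : Fin 2, ∑ D : Fin 2, ∑ E : Fin 2, ∑ F : Fin 2,
    mixed Ψ A B C D * mixed Ψ C D E F * mixed Ψ E F A B

def perms : Fin 24 → Equiv.Perm (Fin 4) := ![⟨![0,1,2,3], ![0,1,2,3], by decide, by decide⟩,
  ⟨![0,1,3,2], ![0,1,3,2], by decide, by decide⟩,
  ⟨![0,2,1,3], ![0,2,1,3], by decide, by decide⟩,
  ⟨![0,2,3,1], ![0,3,1,2], by decide, by decide⟩,
  ⟨![0,3,1,2], ![0,2,3,1], by decide, by decide⟩,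
  ⟨![0,3,2,1], ![0,3,2,1], by decide, by decide⟩,
  ⟨![1,0,2,3], ![1,0,2,3], by decide, by decide⟩,
  ⟨![1,0,3,2], ![1,0,3,2], by decide, by decide⟩,
  ⟨![1,2,0,3], ![2,0,1,3], by decide, by decide⟩,
  ⟨![1,2,3,0], ![3,0,1,2], by decide, by decide⟩,
  ⟨![1,3,0,2], ![2,0,3,1], by decide, by decide⟩,
  ⟨![1,3,2,0], ![3,0,2,1], by decide, by decide⟩,
  ⟨![2,0,1,3], ![1,2,0,3], by decide, by decide⟩,
  ⟨![2,0,3,1], ![1,3,0,2], by decide, by decide⟩,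
  ⟨![2,1,0,3], ![2,1,0,3], by decide, by decide⟩,
  ⟨![2,1,3,0], ![3,1,0,2], by decide, by decide⟩,
  ⟨![2,3,0,1], ![2,3,0,1], by decide, by decide⟩,
  ⟨![2,3,1,0], ![3,2,0,1], by decide, by decide⟩,
  ⟨![3,0,1,2], ![1,2,3,0], by decide, by decide⟩,
  ⟨![3,0,2,1], ![1,3,2,0], by decide, by decide⟩,
  ⟨![3,1,0,2], ![2,1,3,0], by decide, by decide⟩,
  ⟨![3,1,2,0], ![3,1,2,0], by decide, by decide⟩,
  ⟨![3,2,0,1], ![2,3,1,0], by decide, by decide⟩,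
  ⟨![3,2,1,0], ![3,2,1,0], by decide, by decide⟩]

lemma perms_bij : Function.Bijective perms := by decide

lemma sum_perm_eq (F : Fin 4 → Fin 4 → Fin 4 → Fin 4 → ℂ) :
    (∑ σ : Equiv.Perm (Fin 4), F (σ 0) (σ 1) (σ 2) (σ 3))
    = ∑ i : Fin 24, F (perms i 0) (perms i 1) (perms i 2) (perms i 3) :=
  (Fintype.sum_bijective perms perms_bij _ _ (fun _ => rfl)).symm

lemma typeD_val (Ψ : ℂ) (o ι : Fin 2 → ℂ) (A B C D : Fin 2) :
    typeD Ψ o ι A B C D = Ψ * (6:ℂ)⁻¹ *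
      (o A*o B*ι C*ι D + o A*o C*ι B*ι D + o A*o D*ι B*ι C +
       o B*o C*ι A*ι D + o B*o D*ι A*ι C + o C*o D*ι A*ι B) := by
  unfold typeD sym4
  beta_reduce
  rw [sum_perm_eq (fun i j k l => Ψ * (o (![A,B,C,D] i) * o (![A,B,C,D] j) * ι (![A,B,C,D] k) * ι (![A,B,C,D] l)))]
  simp [perms, Fin.sum_univ_succ]
  ring

/-- For a type-D symmetric 4-spinor with Ψ ≠ 0, the quotient ψ := −6J/I equals Ψ. -/
theorem typeD_psi_eq (o ι : Fin 2 → ℂ) (Ψ : ℂ) (hΨ : Ψ ≠ 0) (hd : isDyad o ι) :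
    -6 * cubicInv (typeD Ψ o ι) / quadInv (typeD Ψ o ι) = Ψ := by
  have hd' : o 0 * ι 1 - o 1 * ι 0 = 1 := by
    have := hd
    simp only [isDyad, eps, Fin.sum_univ_two] at this
    norm_num at this
    linear_combination this
  have hq : quadInv (typeD Ψ o ι) = Ψ^2/6 := by
    have h4 : quadInv (typeD Ψ o ι) = Ψ^2/6 * (o 0 * ι 1 - o 1 * ι 0)^4 := by
      simp only [quadInv, typeD_val, Fin.sum_univ_two]
      norm_num [eps]
      ring
    rw [h4, hd']; ring
  have hc : cubicInv (typeD Ψ o ι) = -(Ψ^3)/36 := by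
    have h6 : cubicInv (typeD Ψ o ι) = -(Ψ^3)/36 * (o 0 * ι 1 - o 1 * ι 0)^6 := by
      simp only [cubicInv, mixed, typeD_val, Fin.sum_univ_two]
      norm_num [eps]
      ring
    rw [h6, hd']; ring
  rw [hq, hc]
  field_simp
  ring
end
end

section
/- Conversely to the previous statement: if Ψ_{ABCD} is a symmetric 4-spinor on a 2-dimensional complex symplectic space with Ψ_{ABCD}Ψ^{ABCD} ≠ 0 and H_{ABCDEF} := Ψ_{PQR(A}Ψ^{QR}{}_{BC}Ψ^{P}{}_{DEF)} = 0, then there exist a nonzero scalar Ψ and a dyad (o,ι) with o_Aι^A = 1 such that Ψ_{ABCD} = Ψ·o_{(A}o_B ι_C ι_{D)}. -/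
open Complex Finset

noncomputable section

/-- Ψ_{PQR A}Ψ^{QR}{}_{BC}Ψ^{P}{}_{DEF} before symmetrization. -/
def Hpre (Ψ : Fin 2 → Fin 2 → Fin 2 → Fin 2 → ℂ) :
    Fin 2 → Fin 2 → Fin 2 → Fin 2 → Fin 2 → Fin 2 → ℂ :=
  fun A B C D E F =>
    ∑ P : Fin 2, ∑ Q : Fin 2, ∑ R : Fin 2, ∑ P' : Fin 2, ∑ Q' : Fin 2, ∑ R' : Fin 2,
      eps P P' * eps Q Q' * eps R R' * Ψ P' Q' R' A * Ψ Q R B C * Ψ P D E F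

/-- Full symmetrization of a 6-index spinor, weight 1/6!. -/
def sym6 (T : Fin 2 → Fin 2 → Fin 2 → Fin 2 → Fin 2 → Fin 2 → ℂ) :
    Fin 2 → Fin 2 → Fin 2 → Fin 2 → Fin 2 → Fin 2 → ℂ :=
  fun A B C D E F =>
    (720 : ℂ)⁻¹ * ∑ σ : Equiv.Perm (Fin 6),
      T (![A,B,C,D,E,F] (σ 0)) (![A,B,C,D,E,F] (σ 1)) (![A,B,C,D,E,F] (σ 2))
        (![A,B,C,D,E,F] (σ 3)) (![A,B,C,D,E,F] (σ 4)) (![A,B,C,D,E,F] (σ 5))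

/-- The concomitant H_{ABCDEF} = Ψ_{PQR(A}Ψ^{QR}{}_{BC}Ψ^{P}{}_{DEF)}. -/
def Hcon (Ψ : Fin 2 → Fin 2 → Fin 2 → Fin 2 → ℂ) :
    Fin 2 → Fin 2 → Fin 2 → Fin 2 → Fin 2 → Fin 2 → ℂ :=
  sym6 (Hpre Ψ)


section AuxLemmas

lemma eps00 : eps 0 0 = 0 := rfl
lemma eps01 : eps 0 1 = 1 := rfl
lemma eps10 : eps 1 0 = -1 := rfl
lemma eps11 : eps 1 1 = 0 := rfl

lemma sum_fun_succ {n : ℕ} (g : (Fin (n+1) → Fin 2) → ℂ) :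
    ∑ u : Fin (n+1) → Fin 2, g u = ∑ a : Fin 2, ∑ u : Fin n → Fin 2, g (Fin.cons a u) := by
  rw [← Equiv.sum_comp (Fin.consEquiv (fun _ => Fin 2)) g, Fintype.sum_prod_type]
  rfl

lemma sum_fun_zero (g : (Fin 0 → Fin 2) → ℂ) : ∑ u : Fin 0 → Fin 2, g u = g ![] :=
  Fintype.sum_unique g ▸ congrArg g (Subsingleton.elim _ _)

lemma sum_fun6 (g : (Fin 6 → Fin 2) → ℂ) :
    ∑ u : Fin 6 → Fin 2, g u =
      ∑ A : Fin 2, ∑ B : Fin 2, ∑ C : Fin 2, ∑ D : Fin 2, ∑ E : Fin 2, ∑ F : Fin 2,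
        g ![A,B,C,D,E,F] := by
  simp only [sum_fun_succ, sum_fun_zero]; rfl

lemma sum_fun4 (g : (Fin 4 → Fin 2) → ℂ) :
    ∑ u : Fin 4 → Fin 2, g u =
      ∑ A : Fin 2, ∑ B : Fin 2, ∑ C : Fin 2, ∑ D : Fin 2, g ![A,B,C,D] := by
  simp only [sum_fun_succ, sum_fun_zero]; rfl

lemma vec6_eval : ∀ (A B C D E F : Fin 2),
    ![A,B,C,D,E,F] 0 = A ∧ ![A,B,C,D,E,F] 1 = B ∧ ![A,B,C,D,E,F] 2 = C ∧
    ![A,B,C,D,E,F] 3 = D ∧ ![A,B,C,D,E,F] 4 = E ∧ ![A,B,C,D,E,F] 5 = F := by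
  decide

lemma vec4_eval : ∀ (A B C D : Fin 2),
    ![A,B,C,D] 0 = A ∧ ![A,B,C,D] 1 = B ∧ ![A,B,C,D] 2 = C ∧ ![A,B,C,D] 3 = D := by
  decide

lemma Hpre_eval (Ψ : Fin 2 → Fin 2 → Fin 2 → Fin 2 → ℂ) (A B C D E F : Fin 2) :
    Hpre Ψ A B C D E F =
      Ψ 1 1 1 A * Ψ 0 0 B C * Ψ 0 D E F
      - Ψ 1 1 0 A * Ψ 0 1 B C * Ψ 0 D E F
      - Ψ 1 0 1 A * Ψ 1 0 B C * Ψ 0 D E F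
      + Ψ 1 0 0 A * Ψ 1 1 B C * Ψ 0 D E F
      - Ψ 0 1 1 A * Ψ 0 0 B C * Ψ 1 D E F
      + Ψ 0 1 0 A * Ψ 0 1 B C * Ψ 1 D E F
      + Ψ 0 0 1 A * Ψ 1 0 B C * Ψ 1 D E F
      - Ψ 0 0 0 A * Ψ 1 1 B C * Ψ 1 D E F := by
  simp only [Hpre, Fin.sum_univ_two, eps00, eps01, eps10, eps11]
  ring

lemma reindex_perm_sum {n : ℕ} (σ : Equiv.Perm (Fin n)) (G : (Fin n → Fin 2) → ℂ) :
    ∑ u : Fin n → Fin 2, G (fun i => u (σ i)) = ∑ u : Fin n → Fin 2, G u :=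
  Equiv.sum_comp (Equiv.arrowCongr σ.symm (Equiv.refl (Fin 2))) G

lemma D6 (T : Fin 2 → Fin 2 → Fin 2 → Fin 2 → Fin 2 → Fin 2 → ℂ) (w : Fin 2 → ℂ) :
    ∑ u : Fin 6 → Fin 2, sym6 T (u 0) (u 1) (u 2) (u 3) (u 4) (u 5) *
        (w (u 0) * w (u 1) * w (u 2) * w (u 3) * w (u 4) * w (u 5)) =
    ∑ u : Fin 6 → Fin 2, T (u 0) (u 1) (u 2) (u 3) (u 4) (u 5) *
        (w (u 0) * w (u 1) * w (u 2) * w (u 3) * w (u 4) * w (u 5)) := by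
  have hv : ∀ (u : Fin 6 → Fin 2) (i : Fin 6), ![u 0, u 1, u 2, u 3, u 4, u 5] i = u i := by
    decide
  set G : (Fin 6 → Fin 2) → ℂ := fun u =>
    T (u 0) (u 1) (u 2) (u 3) (u 4) (u 5) *
      (w (u 0) * w (u 1) * w (u 2) * w (u 3) * w (u 4) * w (u 5)) with hG
  have step1 : ∀ u : Fin 6 → Fin 2,
      sym6 T (u 0) (u 1) (u 2) (u 3) (u 4) (u 5) *
        (w (u 0) * w (u 1) * w (u 2) * w (u 3) * w (u 4) * w (u 5)) =
      (720 : ℂ)⁻¹ * ∑ σ : Equiv.Perm (Fin 6), G (fun i => u (σ i)) := by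
    intro u
    have hw : ∀ σ : Equiv.Perm (Fin 6),
        w (u (σ 0)) * w (u (σ 1)) * w (u (σ 2)) * w (u (σ 3)) * w (u (σ 4)) * w (u (σ 5)) =
        w (u 0) * w (u 1) * w (u 2) * w (u 3) * w (u 4) * w (u 5) := by
      intro σ
      have := Equiv.prod_comp σ (fun i => w (u i))
      rw [Fin.prod_univ_six, Fin.prod_univ_six] at this
      exact this
    simp only [sym6, hv, hG]
    rw [mul_assoc, Finset.sum_mul]
    congr 1
    refine Finset.sum_congr rfl fun σ _ => ?_
    rw [← hw σ]
  calc ∑ u : Fin 6 → Fin 2, sym6 T (u 0) (u 1) (u 2) (u 3) (u 4) (u 5) *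
        (w (u 0) * w (u 1) * w (u 2) * w (u 3) * w (u 4) * w (u 5))
      = ∑ u : Fin 6 → Fin 2, (720 : ℂ)⁻¹ * ∑ σ : Equiv.Perm (Fin 6), G (fun i => u (σ i)) := by
        exact Finset.sum_congr rfl fun u _ => step1 u
    _ = (720 : ℂ)⁻¹ * ∑ σ : Equiv.Perm (Fin 6), ∑ u : Fin 6 → Fin 2, G (fun i => u (σ i)) := by
        rw [← Finset.mul_sum, Finset.sum_comm]
    _ = (720 : ℂ)⁻¹ * ∑ σ : Equiv.Perm (Fin 6), ∑ u : Fin 6 → Fin 2, G u := by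
        rw [Finset.sum_congr rfl fun σ _ => reindex_perm_sum σ G]
    _ = ∑ u : Fin 6 → Fin 2, G u := by
        rw [Finset.sum_const, Finset.card_univ, Fintype.card_perm, nsmul_eq_mul]
        norm_num [Nat.factorial]; ring

lemma D4 (T : Fin 2 → Fin 2 → Fin 2 → Fin 2 → ℂ) (w : Fin 2 → ℂ) :
    ∑ u : Fin 4 → Fin 2, sym4 T (u 0) (u 1) (u 2) (u 3) *
        (w (u 0) * w (u 1) * w (u 2) * w (u 3)) =
    ∑ u : Fin 4 → Fin 2, T (u 0) (u 1) (u 2) (u 3) *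
        (w (u 0) * w (u 1) * w (u 2) * w (u 3)) := by
  have hv : ∀ (u : Fin 4 → Fin 2) (i : Fin 4), ![u 0, u 1, u 2, u 3] i = u i := by
    decide
  set G : (Fin 4 → Fin 2) → ℂ := fun u =>
    T (u 0) (u 1) (u 2) (u 3) * (w (u 0) * w (u 1) * w (u 2) * w (u 3)) with hG
  have step1 : ∀ u : Fin 4 → Fin 2,
      sym4 T (u 0) (u 1) (u 2) (u 3) * (w (u 0) * w (u 1) * w (u 2) * w (u 3)) =
      (24 : ℂ)⁻¹ * ∑ σ : Equiv.Perm (Fin 4), G (fun i => u (σ i)) := by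
    intro u
    have hw : ∀ σ : Equiv.Perm (Fin 4),
        w (u (σ 0)) * w (u (σ 1)) * w (u (σ 2)) * w (u (σ 3)) =
        w (u 0) * w (u 1) * w (u 2) * w (u 3) := by
      intro σ
      have := Equiv.prod_comp σ (fun i => w (u i))
      rw [Fin.prod_univ_four, Fin.prod_univ_four] at this
      exact this
    simp only [sym4, hv, hG]
    rw [mul_assoc, Finset.sum_mul]
    congr 1
    refine Finset.sum_congr rfl fun σ _ => ?_
    rw [← hw σ]
  calc ∑ u : Fin 4 → Fin 2, sym4 T (u 0) (u 1) (u 2) (u 3) *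
        (w (u 0) * w (u 1) * w (u 2) * w (u 3))
      = ∑ u : Fin 4 → Fin 2, (24 : ℂ)⁻¹ * ∑ σ : Equiv.Perm (Fin 4), G (fun i => u (σ i)) := by
        exact Finset.sum_congr rfl fun u _ => step1 u
    _ = (24 : ℂ)⁻¹ * ∑ σ : Equiv.Perm (Fin 4), ∑ u : Fin 4 → Fin 2, G (fun i => u (σ i)) := by
        rw [← Finset.mul_sum, Finset.sum_comm]
    _ = (24 : ℂ)⁻¹ * ∑ σ : Equiv.Perm (Fin 4), ∑ u : Fin 4 → Fin 2, G u := by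
        rw [Finset.sum_congr rfl fun σ _ => reindex_perm_sum σ G]
    _ = ∑ u : Fin 4 → Fin 2, G u := by
        rw [Finset.sum_const, Finset.card_univ, Fintype.card_perm, nsmul_eq_mul]
        norm_num [Nat.factorial]; ring

lemma sym4_perm (T : Fin 2 → Fin 2 → Fin 2 → Fin 2 → ℂ) (A B C D : Fin 2)
    (τ : Equiv.Perm (Fin 4)) :
    sym4 T (![A,B,C,D] (τ 0)) (![A,B,C,D] (τ 1)) (![A,B,C,D] (τ 2)) (![A,B,C,D] (τ 3)) =
      sym4 T A B C D := by
  have hv : ∀ (A B C D : Fin 2) (τ : Equiv.Perm (Fin 4)) (j : Fin 4),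
      ![![A,B,C,D] (τ 0), ![A,B,C,D] (τ 1), ![A,B,C,D] (τ 2), ![A,B,C,D] (τ 3)] j
        = ![A,B,C,D] (τ j) := by
    intro A B C D τ j
    fin_cases j <;> rfl
  simp only [sym4]
  congr 1
  rw [← Equiv.sum_comp (Equiv.mulLeft τ)
    (fun σ : Equiv.Perm (Fin 4) =>
      T (![A,B,C,D] (σ 0)) (![A,B,C,D] (σ 1)) (![A,B,C,D] (σ 2)) (![A,B,C,D] (σ 3)))]
  refine Finset.sum_congr rfl fun σ _ => ?_
  simp only [hv, Equiv.coe_mulLeft, Equiv.Perm.mul_apply]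

lemma sym4_perm' (T : Fin 2 → Fin 2 → Fin 2 → Fin 2 → ℂ) (A B C D A' B' C' D' : Fin 2)
    (τ : Equiv.Perm (Fin 4)) (h0 : ![A,B,C,D] (τ 0) = A') (h1 : ![A,B,C,D] (τ 1) = B')
    (h2 : ![A,B,C,D] (τ 2) = C') (h3 : ![A,B,C,D] (τ 3) = D') :
    sym4 T A' B' C' D' = sym4 T A B C D := by
  rw [← h0, ← h1, ← h2, ← h3]
  exact sym4_perm T A B C D τ

end AuxLemmas

lemma key_contract (Ψ : Fin 2 → Fin 2 → Fin 2 → Fin 2 → ℂ)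
    (hsym1 : ∀ A B C D, Ψ A B C D = Ψ B A C D)
    (hsym2 : ∀ A B C D, Ψ A B C D = Ψ A C B D)
    (hsym3 : ∀ A B C D, Ψ A B C D = Ψ A B D C)
    (hH : ∀ A B C D E F : Fin 2, Hcon Ψ A B C D E F = 0) (x y : ℂ) :
    (2 * Ψ 0 0 0 1 * Ψ 0 0 0 1 * Ψ 0 0 0 1 - 3 * Ψ 0 0 0 0 * Ψ 0 0 0 1 * Ψ 0 0 1 1 + Ψ 0 0 0 0 * Ψ 0 0 0 0 * Ψ 0 1 1 1) * x^6
    + (6 * Ψ 0 0 0 1 * Ψ 0 0 0 1 * Ψ 0 0 1 1 - 9 * Ψ 0 0 0 0 * Ψ 0 0 1 1 * Ψ 0 0 1 1 + 2 * Ψ 0 0 0 0 * Ψ 0 0 0 1 * Ψ 0 1 1 1 + Ψ 0 0 0 0 * Ψ 0 0 0 0 * Ψ 1 1 1 1) * x^5 * y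
    + (10 * Ψ 0 0 0 1 * Ψ 0 0 0 1 * Ψ 0 1 1 1 - 15 * Ψ 0 0 0 0 * Ψ 0 0 1 1 * Ψ 0 1 1 1 + 5 * Ψ 0 0 0 0 * Ψ 0 0 0 1 * Ψ 1 1 1 1) * x^4 * y^2
    + (10 * Ψ 0 0 0 1 * Ψ 0 0 0 1 * Ψ 1 1 1 1 - 10 * Ψ 0 0 0 0 * Ψ 0 1 1 1 * Ψ 0 1 1 1) * x^3 * y^3
    + (-10 * Ψ 0 0 0 1 * Ψ 0 1 1 1 * Ψ 0 1 1 1 + 15 * Ψ 0 0 0 1 * Ψ 0 0 1 1 * Ψ 1 1 1 1 - 5 * Ψ 0 0 0 0 * Ψ 0 1 1 1 * Ψ 1 1 1 1) * x^2 * y^4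
    + (-6 * Ψ 0 0 1 1 * Ψ 0 1 1 1 * Ψ 0 1 1 1 + 9 * Ψ 0 0 1 1 * Ψ 0 0 1 1 * Ψ 1 1 1 1 - 2 * Ψ 0 0 0 1 * Ψ 0 1 1 1 * Ψ 1 1 1 1 - Ψ 0 0 0 0 * Ψ 1 1 1 1 * Ψ 1 1 1 1) * x * y^5
    + (-2 * Ψ 0 1 1 1 * Ψ 0 1 1 1 * Ψ 0 1 1 1 + 3 * Ψ 0 0 1 1 * Ψ 0 1 1 1 * Ψ 1 1 1 1 - Ψ 0 0 0 1 * Ψ 1 1 1 1 * Ψ 1 1 1 1) * y^6 = 0 := by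
  have e1 : Ψ 0 0 1 0 = Ψ 0 0 0 1 := hsym3 0 0 1 0
  have e2 : Ψ 0 1 0 0 = Ψ 0 0 0 1 := (hsym2 0 1 0 0).trans e1
  have e3 : Ψ 1 0 0 0 = Ψ 0 0 0 1 := (hsym1 1 0 0 0).trans e2
  have e4 : Ψ 0 1 0 1 = Ψ 0 0 1 1 := hsym2 0 1 0 1
  have e5 : Ψ 0 1 1 0 = Ψ 0 0 1 1 := (hsym3 0 1 1 0).trans e4
  have e6 : Ψ 1 0 0 1 = Ψ 0 0 1 1 := (hsym1 1 0 0 1).trans e4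
  have e7 : Ψ 1 0 1 0 = Ψ 0 0 1 1 := (hsym3 1 0 1 0).trans e6
  have e8 : Ψ 1 1 0 0 = Ψ 0 0 1 1 := (hsym2 1 1 0 0).trans e7
  have e9 : Ψ 1 0 1 1 = Ψ 0 1 1 1 := hsym1 1 0 1 1
  have e10 : Ψ 1 1 0 1 = Ψ 0 1 1 1 := (hsym2 1 1 0 1).trans e9
  have e11 : Ψ 1 1 1 0 = Ψ 0 1 1 1 := (hsym3 1 1 1 0).trans e10
  have h0 : ∑ u : Fin 6 → Fin 2, Hcon Ψ (u 0) (u 1) (u 2) (u 3) (u 4) (u 5) *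
      (![x,y] (u 0) * ![x,y] (u 1) * ![x,y] (u 2) * ![x,y] (u 3) * ![x,y] (u 4) * ![x,y] (u 5)) = 0 :=
    Finset.sum_eq_zero (fun u _ => by rw [hH]; ring)
  rw [show Hcon Ψ = sym6 (Hpre Ψ) from rfl, D6 (Hpre Ψ) ![x,y], sum_fun6] at h0
  simp only [(vec6_eval _ _ _ _ _ _).1, (vec6_eval _ _ _ _ _ _).2.1,
    (vec6_eval _ _ _ _ _ _).2.2.1, (vec6_eval _ _ _ _ _ _).2.2.2.1,
    (vec6_eval _ _ _ _ _ _).2.2.2.2.1, (vec6_eval _ _ _ _ _ _).2.2.2.2.2,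
    Hpre_eval, Fin.sum_univ_two, Matrix.cons_val_zero, Matrix.cons_val_one, Matrix.head_cons,
    e1, e2, e3, e4, e5, e6, e7, e8, e9, e10, e11] at h0
  linear_combination h0

set_option maxHeartbeats 3200000 in
/-- Conversely: if Ψ_{ABCD} is a symmetric 4-spinor with I ≠ 0 and H_{ABCDEF} = 0,
then Ψ_{ABCD} = Ψ·o_{(A}o_B ι_C ι_{D)} for some nonzero scalar Ψ and dyad (o,ι)
with o_A ι^A = 1. -/
theorem Hcon_zero_quadInv_ne_zero_typeD (Ψ : Fin 2 → Fin 2 → Fin 2 → Fin 2 → ℂ)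
    (hsym1 : ∀ A B C D, Ψ A B C D = Ψ B A C D)
    (hsym2 : ∀ A B C D, Ψ A B C D = Ψ A C B D)
    (hsym3 : ∀ A B C D, Ψ A B C D = Ψ A B D C)
    (hI : quadInv Ψ ≠ 0)
    (hH : ∀ A B C D E F : Fin 2, Hcon Ψ A B C D E F = 0) :
    ∃ (c : ℂ) (o ι : Fin 2 → ℂ), c ≠ 0 ∧ isDyad o ι ∧
      ∀ A B C D, Ψ A B C D = typeD c o ι A B C D := by

  -- normalisation of components by symmetry
  have e1 : Ψ 0 0 1 0 = Ψ 0 0 0 1 := hsym3 0 0 1 0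
  have e2 : Ψ 0 1 0 0 = Ψ 0 0 0 1 := (hsym2 0 1 0 0).trans e1
  have e3 : Ψ 1 0 0 0 = Ψ 0 0 0 1 := (hsym1 1 0 0 0).trans e2
  have e4 : Ψ 0 1 0 1 = Ψ 0 0 1 1 := hsym2 0 1 0 1
  have e5 : Ψ 0 1 1 0 = Ψ 0 0 1 1 := (hsym3 0 1 1 0).trans e4
  have e6 : Ψ 1 0 0 1 = Ψ 0 0 1 1 := (hsym1 1 0 0 1).trans e4
  have e7 : Ψ 1 0 1 0 = Ψ 0 0 1 1 := (hsym3 1 0 1 0).trans e6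
  have e8 : Ψ 1 1 0 0 = Ψ 0 0 1 1 := (hsym2 1 1 0 0).trans e7
  have e9 : Ψ 1 0 1 1 = Ψ 0 1 1 1 := hsym1 1 0 1 1
  have e10 : Ψ 1 1 0 1 = Ψ 0 1 1 1 := (hsym2 1 1 0 1).trans e9
  have e11 : Ψ 1 1 1 0 = Ψ 0 1 1 1 := (hsym3 1 1 1 0).trans e10
  have key := key_contract Ψ hsym1 hsym2 hsym3 hH
  have G0 : 2 * Ψ 0 0 0 1 * Ψ 0 0 0 1 * Ψ 0 0 0 1 - 3 * Ψ 0 0 0 0 * Ψ 0 0 0 1 * Ψ 0 0 1 1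
      + Ψ 0 0 0 0 * Ψ 0 0 0 0 * Ψ 0 1 1 1 = 0 := by linear_combination key 1 0
  have G6 : -2 * Ψ 0 1 1 1 * Ψ 0 1 1 1 * Ψ 0 1 1 1 + 3 * Ψ 0 0 1 1 * Ψ 0 1 1 1 * Ψ 1 1 1 1
      - Ψ 0 0 0 1 * Ψ 1 1 1 1 * Ψ 1 1 1 1 = 0 := by linear_combination key 0 1
  have G1 : 6 * Ψ 0 0 0 1 * Ψ 0 0 0 1 * Ψ 0 0 1 1 - 9 * Ψ 0 0 0 0 * Ψ 0 0 1 1 * Ψ 0 0 1 1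
      + 2 * Ψ 0 0 0 0 * Ψ 0 0 0 1 * Ψ 0 1 1 1 + Ψ 0 0 0 0 * Ψ 0 0 0 0 * Ψ 1 1 1 1 = 0 := by
    linear_combination (3/4 : ℂ) * key 1 1 - (3/4 : ℂ) * key 1 (-1) - (3/20 : ℂ) * key 1 2
      + (3/20 : ℂ) * key 1 (-2) + (1/60 : ℂ) * key 1 3 - (1/60 : ℂ) * key 1 (-3)
  have G5 : -6 * Ψ 0 0 1 1 * Ψ 0 1 1 1 * Ψ 0 1 1 1 + 9 * Ψ 0 0 1 1 * Ψ 0 0 1 1 * Ψ 1 1 1 1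
      - 2 * Ψ 0 0 0 1 * Ψ 0 1 1 1 * Ψ 1 1 1 1 - Ψ 0 0 0 0 * Ψ 1 1 1 1 * Ψ 1 1 1 1 = 0 := by
    linear_combination (1/48 : ℂ) * key 1 1 - (1/48 : ℂ) * key 1 (-1) - (1/60 : ℂ) * key 1 2
      + (1/60 : ℂ) * key 1 (-2) + (1/240 : ℂ) * key 1 3 - (1/240 : ℂ) * key 1 (-3)
  have hIexp : quadInv Ψ = 2 * (Ψ 0 0 0 0 * Ψ 1 1 1 1) - 8 * (Ψ 0 0 0 1 * Ψ 0 1 1 1)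
      + 6 * (Ψ 0 0 1 1 * Ψ 0 0 1 1) := by
    simp only [quadInv, Fin.sum_univ_two, eps00, eps01, eps10, eps11,
      e1, e2, e3, e4, e5, e6, e7, e8, e9, e10, e11]
    ring
  -- construct the (unnormalised) square representation
  obtain ⟨c₀, α, β, γ, hc₀, r0, r1, r2, r3, r4⟩ :
      ∃ c₀ α β γ : ℂ, c₀ ≠ 0 ∧ Ψ 0 0 0 0 = c₀ * α^2 ∧ Ψ 0 0 0 1 = c₀ * α * β / 2 ∧
        Ψ 0 0 1 1 = c₀ * (β^2 + 2*α*γ) / 6 ∧ Ψ 0 1 1 1 = c₀ * β * γ / 2 ∧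
        Ψ 1 1 1 1 = c₀ * γ^2 := by
    by_cases hp0 : Ψ 0 0 0 0 = 0
    · by_cases hp4 : Ψ 1 1 1 1 = 0
      · -- middle case: Ψ = 6 p2 x² y²
        have hp1 : Ψ 0 0 0 1 = 0 := by
          have h3 : Ψ 0 0 0 1 ^ 3 = 0 := by
            linear_combination (1/2 : ℂ) * G0 + (3/2 : ℂ) * Ψ 0 0 0 1 * Ψ 0 0 1 1 * hp0
              - (1/2 : ℂ) * Ψ 0 0 0 0 * Ψ 0 1 1 1 * hp0
          exact pow_eq_zero_iff (by norm_num) |>.mp h3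
        have hp3 : Ψ 0 1 1 1 = 0 := by
          have h3 : Ψ 0 1 1 1 ^ 3 = 0 := by
            linear_combination (-1/2 : ℂ) * G6 + (3/2 : ℂ) * Ψ 0 0 1 1 * Ψ 0 1 1 1 * hp4
              - (1/2 : ℂ) * Ψ 0 0 0 1 * Ψ 1 1 1 1 * hp4
          exact pow_eq_zero_iff (by norm_num) |>.mp h3
        have hp2 : Ψ 0 0 1 1 ≠ 0 := by
          intro h2
          apply hI
          rw [hIexp, hp0, hp1, hp3, h2]; ring
        exact ⟨6 * Ψ 0 0 1 1, 0, 1, 0, by simpa using hp2,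
          by rw [hp0]; ring, by rw [hp1]; ring, by ring, by rw [hp3]; ring, by rw [hp4]; ring⟩
      · -- p0 = 0, p4 ≠ 0 : mirror construction
        refine ⟨Ψ 1 1 1 1, (3 * Ψ 1 1 1 1 * Ψ 0 0 1 1 - 2 * Ψ 0 1 1 1^2) / Ψ 1 1 1 1^2,
          2 * Ψ 0 1 1 1 / Ψ 1 1 1 1, 1, hp4, ?_, ?_, ?_, ?_, by ring⟩
        · field_simp
          linear_combination (-(Ψ 1 1 1 1)) * G5 + (2 * Ψ 0 1 1 1) * G6
        · field_simp
          linear_combination (-1 : ℂ) * G6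
        · field_simp
          ring
        · field_simp
    · -- p0 ≠ 0
      refine ⟨Ψ 0 0 0 0, 1, 2 * Ψ 0 0 0 1 / Ψ 0 0 0 0,
        (3 * Ψ 0 0 0 0 * Ψ 0 0 1 1 - 2 * Ψ 0 0 0 1^2) / Ψ 0 0 0 0^2, hp0, by ring, ?_, ?_, ?_, ?_⟩
      · field_simp
      · field_simp
        ring
      · field_simp
        linear_combination G0
      · field_simp
        linear_combination (Ψ 0 0 0 0) * G1 - (2 * Ψ 0 0 0 1) * G0
  -- Δ ≠ 0 from I ≠ 0
  have hΔ : β^2 - 4*α*γ ≠ 0 := by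
    intro h
    apply hI
    rw [hIexp, r0, r1, r2, r3, r4]
    linear_combination (c₀^2 * (β^2 - 4*α*γ) / 6) * h
  -- normalise Δ = 1
  obtain ⟨s, hs⟩ := IsAlgClosed.exists_pow_nat_eq (k := ℂ) (β^2 - 4*α*γ) (n := 2) (by norm_num)
  have hsne : s ≠ 0 := by
    intro h
    rw [h] at hs
    exact hΔ (by linear_combination -hs)
  obtain ⟨cc, hcc⟩ : ∃ cc : ℂ, cc = c₀ * s^2 := ⟨_, rfl⟩
  obtain ⟨aa, haa⟩ : ∃ aa : ℂ, aa = α / s := ⟨_, rfl⟩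
  obtain ⟨bb, hbb⟩ : ∃ bb : ℂ, bb = β / s := ⟨_, rfl⟩
  obtain ⟨gg, hgg⟩ : ∃ gg : ℂ, gg = γ / s := ⟨_, rfl⟩
  have hcne : cc ≠ 0 := by rw [hcc]; exact mul_ne_zero hc₀ (pow_ne_zero 2 hsne)
  have rr0 : Ψ 0 0 0 0 = cc * aa^2 := by rw [hcc, haa]; field_simp; linear_combination r0
  have rr1 : Ψ 0 0 0 1 = cc * aa * bb / 2 := by
    rw [hcc, haa, hbb]; field_simp; linear_combination 2 * r1
  have rr2 : Ψ 0 0 1 1 = cc * (bb^2 + 2*aa*gg) / 6 := by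
    rw [hcc, haa, hbb, hgg]; field_simp; linear_combination 6 * r2
  have rr3 : Ψ 0 1 1 1 = cc * bb * gg / 2 := by
    rw [hcc, hbb, hgg]; field_simp; linear_combination 2 * r3
  have rr4 : Ψ 1 1 1 1 = cc * gg^2 := by rw [hcc, hgg]; field_simp; linear_combination r4
  have hunit : bb^2 - 4*aa*gg = 1 := by
    rw [haa, hbb, hgg]
    field_simp
    linear_combination (-1 : ℂ) * hs
  -- factor the unit-discriminant quadratic into a dyad
  obtain ⟨o, ι, ho0, hob, ho1, hdy⟩ :
      ∃ o ι : Fin 2 → ℂ, o 0 * ι 0 = aa ∧ o 0 * ι 1 + o 1 * ι 0 = bb ∧ o 1 * ι 1 = gg ∧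
        o 0 * ι 1 - o 1 * ι 0 = 1 := by
    by_cases ha : aa = 0
    · have hb2 : (bb - 1) * (bb + 1) = 0 := by
        rw [ha] at hunit
        linear_combination hunit
      rcases mul_eq_zero.mp hb2 with hb | hb
      · refine ⟨![1, gg], ![0, 1], by simp [ha], ?_, by simp, by simp⟩
        show 1 * 1 + gg * 0 = bb
        linear_combination -hb
      · refine ⟨![0, 1], ![-1, gg], by simp [ha], ?_, by simp, by simp⟩
        show 0 * gg + 1 * (-1) = bb
        linear_combination -hb
    · refine ⟨![aa, (bb - 1)/2], ![1, (bb + 1)/(2*aa)], by simp, ?_, ?_, ?_⟩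
      · show aa * ((bb + 1)/(2*aa)) + (bb - 1)/2 * 1 = bb
        field_simp
        ring
      · show (bb - 1)/2 * ((bb + 1)/(2*aa)) = gg
        field_simp
        linear_combination hunit
      · show aa * ((bb + 1)/(2*aa)) - (bb - 1)/2 * 1 = 1
        field_simp
        ring
  -- typeD symmetry instances
  have ts1 : ∀ A B C D, typeD cc o ι A B C D = typeD cc o ι B A C D := by
    intro A B C D
    exact (sym4_perm' (fun a b c' d => cc * (o a * o b * ι c' * ι d)) B A C D A B C D (Equiv.swap 0 1) rfl rfl rfl rfl)
  have ts2 : ∀ A B C D, typeD cc o ι A B C D = typeD cc o ι A C B D := by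
    intro A B C D
    exact (sym4_perm' (fun a b c' d => cc * (o a * o b * ι c' * ι d)) A C B D A B C D (Equiv.swap 1 2) rfl rfl rfl rfl)
  have ts3 : ∀ A B C D, typeD cc o ι A B C D = typeD cc o ι A B D C := by
    intro A B C D
    exact (sym4_perm' (fun a b c' d => cc * (o a * o b * ι c' * ι d)) A B D C A B C D (Equiv.swap 2 3) rfl rfl rfl rfl)
  have f1 : typeD cc o ι 0 0 1 0 = typeD cc o ι 0 0 0 1 := ts3 0 0 1 0
  have f2 : typeD cc o ι 0 1 0 0 = typeD cc o ι 0 0 0 1 := (ts2 0 1 0 0).trans f1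
  have f3 : typeD cc o ι 1 0 0 0 = typeD cc o ι 0 0 0 1 := (ts1 1 0 0 0).trans f2
  have f4 : typeD cc o ι 0 1 0 1 = typeD cc o ι 0 0 1 1 := ts2 0 1 0 1
  have f5 : typeD cc o ι 0 1 1 0 = typeD cc o ι 0 0 1 1 := (ts3 0 1 1 0).trans f4
  have f6 : typeD cc o ι 1 0 0 1 = typeD cc o ι 0 0 1 1 := (ts1 1 0 0 1).trans f4
  have f7 : typeD cc o ι 1 0 1 0 = typeD cc o ι 0 0 1 1 := (ts3 1 0 1 0).trans f6
  have f8 : typeD cc o ι 1 1 0 0 = typeD cc o ι 0 0 1 1 := (ts2 1 1 0 0).trans f7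
  have f9 : typeD cc o ι 1 0 1 1 = typeD cc o ι 0 1 1 1 := ts1 1 0 1 1
  have f10 : typeD cc o ι 1 1 0 1 = typeD cc o ι 0 1 1 1 := (ts2 1 1 0 1).trans f9
  have f11 : typeD cc o ι 1 1 1 0 = typeD cc o ι 0 1 1 1 := (ts3 1 1 1 0).trans f10
  -- contraction of typeD
  have hforms : ∀ x y : ℂ,
      typeD cc o ι 0 0 0 0 * x^4 + 4 * typeD cc o ι 0 0 0 1 * x^3*y
        + 6 * typeD cc o ι 0 0 1 1 * x^2*y^2 + 4 * typeD cc o ι 0 1 1 1 * x*y^3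
        + typeD cc o ι 1 1 1 1 * y^4
      = cc * (o 0 * x + o 1 * y)^2 * (ι 0 * x + ι 1 * y)^2 := by
    intro x y
    have h := D4 (fun a b c' d => cc * (o a * o b * ι c' * ι d)) ![x, y]
    rw [sum_fun4, sum_fun4] at h
    simp only [(vec4_eval _ _ _ _).1, (vec4_eval _ _ _ _).2.1,
      (vec4_eval _ _ _ _).2.2.1, (vec4_eval _ _ _ _).2.2.2,
      Fin.sum_univ_two, Matrix.cons_val_zero, Matrix.cons_val_one, Matrix.head_cons] at h
    have h' : ∀ A B C D : Fin 2, sym4 (fun a b c' d => cc * (o a * o b * ι c' * ι d)) A B C D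
        = typeD cc o ι A B C D := fun _ _ _ _ => rfl
    simp only [h'] at h
    simp only [f1, f2, f3, f4, f5, f6, f7, f8, f9, f10, f11] at h
    linear_combination h
  -- the quartic form of Ψ agrees with that of typeD
  have hq : ∀ x y : ℂ,
      cc * (o 0 * x + o 1 * y)^2 * (ι 0 * x + ι 1 * y)^2
      = Ψ 0 0 0 0 * x^4 + 4 * Ψ 0 0 0 1 * x^3*y + 6 * Ψ 0 0 1 1 * x^2*y^2
        + 4 * Ψ 0 1 1 1 * x*y^3 + Ψ 1 1 1 1 * y^4 := by
    intro x y
    rw [rr0, rr1, rr2, rr3, rr4, ← ho0, ← hob, ← ho1]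
    ring
  have hdiff : ∀ x y : ℂ,
      (typeD cc o ι 0 0 0 0 - Ψ 0 0 0 0) * x^4
      + 4 * (typeD cc o ι 0 0 0 1 - Ψ 0 0 0 1) * x^3*y
      + 6 * (typeD cc o ι 0 0 1 1 - Ψ 0 0 1 1) * x^2*y^2
      + 4 * (typeD cc o ι 0 1 1 1 - Ψ 0 1 1 1) * x*y^3
      + (typeD cc o ι 1 1 1 1 - Ψ 1 1 1 1) * y^4 = 0 := by
    intro x y
    linear_combination hforms x y + hq x y
  have T0 : typeD cc o ι 0 0 0 0 = Ψ 0 0 0 0 := by linear_combination hdiff 1 0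
  have T4 : typeD cc o ι 1 1 1 1 = Ψ 1 1 1 1 := by linear_combination hdiff 0 1
  have T1 : typeD cc o ι 0 0 0 1 = Ψ 0 0 0 1 := by
    linear_combination (1/6 : ℂ) * hdiff 1 1 - (1/6 : ℂ) * hdiff 1 (-1)
      - (1/48 : ℂ) * hdiff 1 2 + (1/48 : ℂ) * hdiff 1 (-2)
  have T3 : typeD cc o ι 0 1 1 1 = Ψ 0 1 1 1 := by
    linear_combination (-1/24 : ℂ) * hdiff 1 1 + (1/24 : ℂ) * hdiff 1 (-1)
      + (1/48 : ℂ) * hdiff 1 2 - (1/48 : ℂ) * hdiff 1 (-2)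
  have T2 : typeD cc o ι 0 0 1 1 = Ψ 0 0 1 1 := by
    linear_combination (-5/24 : ℂ) * hdiff 1 0 + (1/9 : ℂ) * hdiff 1 1 + (1/9 : ℂ) * hdiff 1 (-1)
      - (1/144 : ℂ) * hdiff 1 2 - (1/144 : ℂ) * hdiff 1 (-2)
  refine ⟨cc, o, ι, hcne, ?_, ?_⟩
  · simp only [isDyad, Fin.sum_univ_two, eps00, eps01, eps10, eps11]
    linear_combination hdy
  · intro A B C D
    fin_cases A <;> fin_cases B <;> fin_cases C <;> fin_cases D <;>
      simp only [Fin.mk_zero, Fin.mk_one]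
    · exact T0.symm
    · exact T1.symm
    · rw [e1, f1]; exact T1.symm
    · exact T2.symm
    · rw [e2, f2]; exact T1.symm
    · rw [e4, f4]; exact T2.symm
    · rw [e5, f5]; exact T2.symm
    · exact T3.symm
    · rw [e3, f3]; exact T1.symm
    · rw [e6, f6]; exact T2.symm
    · rw [e7, f7]; exact T2.symm
    · rw [e9, f9]; exact T3.symm
    · rw [e8, f8]; exact T2.symm
    · rw [e10, f10]; exact T3.symm
    · rw [e11, f11]; exact T3.symm
    · exact T4.symm
end
end

section
/- If Ψ_{ABCD} = Ψ·o_{(A}o_B ι_C ι_{D)} is a type-D symmetric 4-spinor and κ_{AB} = Ψ^{−1/3} o_{(A}ι_{B)}, then the Buchdahl constraint Ψ_{(ABC}{}^{Q}κ_{D)Q} = 0 holds identically. -/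
open Complex Finset

noncomputable section

/-- κ_{AB} = o_{(A}ι_{B)}. -/
def kappaSym (o ι : Fin 2 → ℂ) : Fin 2 → Fin 2 → ℂ :=
  fun A B => (o A * ι B + o B * ι A) / 2

/-- The Buchdahl expression Ψ_{(ABC}{}^{Q}κ_{D)Q}. -/
def buchdahl (Ψ : Fin 2 → Fin 2 → Fin 2 → Fin 2 → ℂ) (κ : Fin 2 → Fin 2 → ℂ) :
    Fin 2 → Fin 2 → Fin 2 → Fin 2 → ℂ :=
  sym4 (fun a b c d => ∑ Q : Fin 2, ∑ Q' : Fin 2, eps Q Q' * Ψ a b c Q' * κ d Q)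

set_option maxRecDepth 10000 in
lemma perm4_expand (f : Equiv.Perm (Fin 4) → ℂ) :
    ∑ σ : Equiv.Perm (Fin 4), f σ =
    ∑ a : Fin 4, ∑ b : Fin 3, ∑ c : Fin 2,
      f (Equiv.Perm.decomposeFin.symm (a, Equiv.Perm.decomposeFin.symm
          (b, Equiv.Perm.decomposeFin.symm (c, 1)))) := by
  rw [Finset.univ_perm_fin_succ, Finset.sum_map, Fintype.sum_prod_type]
  refine Finset.sum_congr rfl fun a _ => ?_
  rw [Finset.univ_perm_fin_succ, Finset.sum_map, Fintype.sum_prod_type]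
  refine Finset.sum_congr rfl fun b _ => ?_
  rw [Finset.univ_perm_fin_succ, Finset.sum_map, Fintype.sum_prod_type]
  refine Finset.sum_congr rfl fun c _ => ?_
  exact Fintype.sum_unique _ |>.trans rfl

set_option maxRecDepth 10000 in
lemma sum24 (T : Fin 2 → Fin 2 → Fin 2 → Fin 2 → ℂ) (A B C D : Fin 2) :
    (∑ σ : Equiv.Perm (Fin 4),
      T (![A,B,C,D] (σ 0)) (![A,B,C,D] (σ 1)) (![A,B,C,D] (σ 2)) (![A,B,C,D] (σ 3))) =
    T A B C D + T A B D C + T A C B D + T A C D B + T A D B C + T A D C B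
  + T B A C D + T B A D C + T B C A D + T B C D A + T B D A C + T B D C A
  + T C A B D + T C A D B + T C B A D + T C B D A + T C D A B + T C D B A
  + T D A B C + T D A C B + T D B A C + T D B C A + T D C A B + T D C B A := by
  rw [perm4_expand]
  simp only [Fin.sum_univ_four, Fin.sum_univ_three, Fin.sum_univ_two,
    show (3:Fin 4) = Fin.succ 2 from rfl, show (2:Fin 4) = Fin.succ 1 from rfl,
    show (2:Fin 3) = Fin.succ 1 from rfl,
    Equiv.Perm.decomposeFin_symm_apply_zero, Equiv.Perm.decomposeFin_symm_apply_succ,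
    Equiv.Perm.decomposeFin_symm_apply_one]
  norm_num [Equiv.swap_apply_def, Fin.succ_ne_zero, Matrix.cons_val_zero, Matrix.cons_val_one,
    Matrix.head_cons, Matrix.cons_val_succ]
  simp (config := { decide := true }) [Matrix.cons_val_zero, Matrix.cons_val_one,
    Matrix.head_cons, Matrix.cons_val_succ]
  ring

/-- For a type-D spinor and κ_{AB} = Ψ^{−1/3} o_{(A}ι_{B)}, the Buchdahl constraint
Ψ_{(ABC}{}^{Q}κ_{D)Q} = 0 holds identically. -/
theorem typeD_buchdahl (o ι : Fin 2 → ℂ) (hd : isDyad o ι) (Ψ c : ℂ) (hΨ : Ψ ≠ 0)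
    (hc : c ^ 3 = Ψ) :
    ∀ A B C D, buchdahl (typeD Ψ o ι) (fun X Y => c⁻¹ * kappaSym o ι X Y) A B C D = 0 := by
  have htd : ∀ a b c d, typeD Ψ o ι a b c d = Ψ/6 *
      (o a*o b*(ι c*ι d) + o a*o c*(ι b*ι d) + o a*o d*(ι b*ι c)
       + o b*o c*(ι a*ι d) + o b*o d*(ι a*ι c) + o c*o d*(ι a*ι b)) := by
    intro a b c d
    simp only [typeD, sym4]
    rw [sum24 (fun x y z w => Ψ * (o x * o y * ι z * ι w))]
    ring
  intro A B C D
  simp only [buchdahl, sym4]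
  rw [sum24 (fun x y z w => ∑ Q : Fin 2, ∑ Q' : Fin 2,
    eps Q Q' * typeD Ψ o ι x y z Q' * ((fun X Y => c⁻¹ * kappaSym o ι X Y) w Q))]
  simp only [htd, kappaSym, eps, Fin.sum_univ_two]
  norm_num
  ring
end
end

section
/- Suppose a symmetric 4-spinor Ψ_{ABCD} satisfies Ψ_{(ABC}{}^{Q}κ_{D)Q} = 0 for some symmetric 2-spinor κ_{AB} with κ_{AB}κ^{AB} ≠ 0. Then Ψ_{ABCD} = c·κ_{(AB}κ_{CD)} for some scalar c. -/
open Complex Finset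

noncomputable section

/-- κ_{AB}κ^{AB} for a symmetric 2-spinor. -/
def contract2 (κ : Fin 2 → Fin 2 → ℂ) : ℂ :=
  ∑ A : Fin 2, ∑ B : Fin 2, ∑ A' : Fin 2, ∑ B' : Fin 2,
    eps A A' * eps B B' * κ A B * κ A' B'

lemma univ_perm4 : (Finset.univ : Finset (Equiv.Perm (Fin 4))) =
    {(Equiv.mk ![0,1,2,3] ![0,1,2,3] (by decide) (by decide) : Equiv.Perm (Fin 4)), (Equiv.mk ![0,1,3,2] ![0,1,3,2] (by decide) (by decide) : Equiv.Perm (Fin 4)), (Equiv.mk ![0,2,1,3] ![0,2,1,3] (by decide) (by decide) : Equiv.Perm (Fin 4)), (Equiv.mk ![0,2,3,1] ![0,3,1,2] (by decide) (by decide) : Equiv.Perm (Fin 4)), (Equiv.mk ![0,3,1,2] ![0,2,3,1] (by decide) (by decide) : Equiv.Perm (Fin 4)), (Equiv.mk ![0,3,2,1] ![0,3,2,1] (by decide) (by decide) : Equiv.Perm (Fin 4)), (Equiv.mk ![1,0,2,3] ![1,0,2,3] (by decide) (by decide) : Equiv.Perm (Fin 4)), (Equiv.mk ![1,0,3,2]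 ![1,0,3,2] (by decide) (by decide) : Equiv.Perm (Fin 4)), (Equiv.mk ![1,2,0,3] ![2,0,1,3] (by decide) (by decide) : Equiv.Perm (Fin 4)), (Equiv.mk ![1,2,3,0] ![3,0,1,2] (by decide) (by decide) : Equiv.Perm (Fin 4)), (Equiv.mk ![1,3,0,2] ![2,0,3,1] (by decide) (by decide) : Equiv.Perm (Fin 4)), (Equiv.mk ![1,3,2,0] ![3,0,2,1] (by decide) (by decide) : Equiv.Perm (Fin 4)), (Equiv.mk ![2,0,1,3] ![1,2,0,3] (by decide) (by decide) : Equiv.Perm (Fin 4)), (Equiv.mk ![2,0,3,1] ![1,3,0,2] (by decide) (by decide) : Equiv.Perm (Fin 4)), (Equiv.mk ![2,1,0,3] ![2,1,0,3] (by decide) (by decide) : Equiv.Perm (Fin 4)), (Equiv.mk ![2,1,3,0] ![3,1,0,2] (by decide) (by decide) : Equiv.Perm (Fin 4)), (Equiv.mk ![2,3,0,1] ![2,3,0,1] (by decide) (by decide) : Equiv.Perm (Fin 4)), (Equiv.mk ![2,3,1,0] ![3,2,0,1] (by decide) (by decide) : Equiv.Perm (Fin 4)), (Equiv.mk ![3,0,1,2]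 ![1,2,3,0] (by decide) (by decide) : Equiv.Perm (Fin 4)), (Equiv.mk ![3,0,2,1] ![1,3,2,0] (by decide) (by decide) : Equiv.Perm (Fin 4)), (Equiv.mk ![3,1,0,2] ![2,1,3,0] (by decide) (by decide) : Equiv.Perm (Fin 4)), (Equiv.mk ![3,1,2,0] ![3,1,2,0] (by decide) (by decide) : Equiv.Perm (Fin 4)), (Equiv.mk ![3,2,0,1] ![2,3,1,0] (by decide) (by decide) : Equiv.Perm (Fin 4)), (Equiv.mk ![3,2,1,0] ![3,2,1,0] (by decide) (by decide) : Equiv.Perm (Fin 4))} := by decide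

lemma sym4_eval (T : Fin 2 → Fin 2 → Fin 2 → Fin 2 → ℂ) (A B C D : Fin 2) :
    sym4 T A B C D = (24 : ℂ)⁻¹ * (T A B C D + T A B D C + T A C B D + T A C D B + T A D B C + T A D C B + T B A C D + T B A D C + T B C A D + T B C D A + T B D A C + T B D C A + T C A B D + T C A D B + T C B A D + T C B D A + T C D A B + T C D B A + T D A B C + T D A C B + T D B A C + T D B C A + T D C A B + T D C B A) := by
  rw [sym4, univ_perm4]
  rw [Finset.sum_insert (by decide)]
  rw [Finset.sum_insert (by decide)]
  rw [Finset.sum_insert (by decide)]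
  rw [Finset.sum_insert (by decide)]
  rw [Finset.sum_insert (by decide)]
  rw [Finset.sum_insert (by decide)]
  rw [Finset.sum_insert (by decide)]
  rw [Finset.sum_insert (by decide)]
  rw [Finset.sum_insert (by decide)]
  rw [Finset.sum_insert (by decide)]
  rw [Finset.sum_insert (by decide)]
  rw [Finset.sum_insert (by decide)]
  rw [Finset.sum_insert (by decide)]
  rw [Finset.sum_insert (by decide)]
  rw [Finset.sum_insert (by decide)]
  rw [Finset.sum_insert (by decide)]
  rw [Finset.sum_insert (by decide)]
  rw [Finset.sum_insert (by decide)]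
  rw [Finset.sum_insert (by decide)]
  rw [Finset.sum_insert (by decide)]
  rw [Finset.sum_insert (by decide)]
  rw [Finset.sum_insert (by decide)]
  rw [Finset.sum_insert (by decide)]
  rw [Finset.sum_singleton]
  norm_num [Matrix.cons_val_zero, Matrix.cons_val_one,
    Matrix.head_cons, Matrix.cons_val_two, Matrix.cons_val_three, Matrix.tail_cons]
  ring

/-- If a symmetric 4-spinor Ψ satisfies the Buchdahl constraint with respect to an
algebraically general symmetric 2-spinor κ (κ_{AB}κ^{AB} ≠ 0), then
Ψ_{ABCD} = c·κ_{(AB}κ_{CD)} for some scalar c. -/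
theorem buchdahl_implies_typeD (Ψ : Fin 2 → Fin 2 → Fin 2 → Fin 2 → ℂ)
    (hsym1 : ∀ A B C D, Ψ A B C D = Ψ B A C D)
    (hsym2 : ∀ A B C D, Ψ A B C D = Ψ A C B D)
    (hsym3 : ∀ A B C D, Ψ A B C D = Ψ A B D C)
    (κ : Fin 2 → Fin 2 → ℂ) (hκsym : ∀ A B, κ A B = κ B A)
    (hκ : contract2 κ ≠ 0)
    (hB : ∀ A B C D, buchdahl Ψ κ A B C D = 0) :
    ∃ c : ℂ, ∀ A B C D,
      Ψ A B C D = c * sym4 (fun a b c' d => κ a b * κ c' d) A B C D := by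
  have s0010 : Ψ 0 0 1 0 = Ψ 0 0 0 1 := by rw [hsym3]
  have s0100 : Ψ 0 1 0 0 = Ψ 0 0 0 1 := by rw [hsym2, hsym3]
  have s0101 : Ψ 0 1 0 1 = Ψ 0 0 1 1 := by rw [hsym2]
  have s0110 : Ψ 0 1 1 0 = Ψ 0 0 1 1 := by rw [hsym3, hsym2]
  have s1000 : Ψ 1 0 0 0 = Ψ 0 0 0 1 := by rw [hsym1, hsym2, hsym3]
  have s1001 : Ψ 1 0 0 1 = Ψ 0 0 1 1 := by rw [hsym1, hsym2]
  have s1010 : Ψ 1 0 1 0 = Ψ 0 0 1 1 := by rw [hsym1, hsym3, hsym2]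
  have s1011 : Ψ 1 0 1 1 = Ψ 0 1 1 1 := by rw [hsym1]
  have s1100 : Ψ 1 1 0 0 = Ψ 0 0 1 1 := by rw [hsym2, hsym3, hsym1, hsym2]
  have s1101 : Ψ 1 1 0 1 = Ψ 0 1 1 1 := by rw [hsym2, hsym1]
  have s1110 : Ψ 1 1 1 0 = Ψ 0 1 1 1 := by rw [hsym3, hsym2, hsym1]
  have he00 : eps 0 0 = 0 := by norm_num [eps]
  have he01 : eps 0 1 = 1 := by norm_num [eps]
  have he10 : eps 1 0 = -1 := by norm_num [eps]
  have he11 : eps 1 1 = 0 := by norm_num [eps]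
  have hk10 : κ 1 0 = κ 0 1 := hκsym 1 0
  have e0 : κ 0 0 * Ψ 0 0 0 1 - κ 0 1 * Ψ 0 0 0 0 = 0 := by
    have h := hB 0 0 0 0
    simp only [buchdahl] at h
    rw [sym4_eval] at h
    simp only [Fin.sum_univ_two, he00, he01, he10, he11, hk10, s0010, s0100, s0101, s0110, s1000, s1001, s1010, s1011, s1100, s1101, s1110] at h
    linear_combination (1 : ℂ) * h
  have e1 : 3*(κ 0 0) * Ψ 0 0 1 1 - 2*(κ 0 1) * Ψ 0 0 0 1 - κ 1 1 * Ψ 0 0 0 0 = 0 := by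
    have h := hB 0 0 0 1
    simp only [buchdahl] at h
    rw [sym4_eval] at h
    simp only [Fin.sum_univ_two, he00, he01, he10, he11, hk10, s0010, s0100, s0101, s0110, s1000, s1001, s1010, s1011, s1100, s1101, s1110] at h
    linear_combination (4 : ℂ) * h
  have e2 : κ 0 0 * Ψ 0 1 1 1 - κ 1 1 * Ψ 0 0 0 1 = 0 := by
    have h := hB 0 0 1 1
    simp only [buchdahl] at h
    rw [sym4_eval] at h
    simp only [Fin.sum_univ_two, he00, he01, he10, he11, hk10, s0010, s0100, s0101, s0110, s1000, s1001, s1010, s1011, s1100, s1101, s1110] at h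
    linear_combination (2 : ℂ) * h
  have e3 : κ 0 0 * Ψ 1 1 1 1 + 2*(κ 0 1) * Ψ 0 1 1 1 - 3*(κ 1 1) * Ψ 0 0 1 1 = 0 := by
    have h := hB 0 1 1 1
    simp only [buchdahl] at h
    rw [sym4_eval] at h
    simp only [Fin.sum_univ_two, he00, he01, he10, he11, hk10, s0010, s0100, s0101, s0110, s1000, s1001, s1010, s1011, s1100, s1101, s1110] at h
    linear_combination (4 : ℂ) * h
  have e4 : κ 0 1 * Ψ 1 1 1 1 - κ 1 1 * Ψ 0 1 1 1 = 0 := by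
    have h := hB 1 1 1 1
    simp only [buchdahl] at h
    rw [sym4_eval] at h
    simp only [Fin.sum_univ_two, he00, he01, he10, he11, hk10, s0010, s0100, s0101, s0110, s1000, s1001, s1010, s1011, s1100, s1101, s1110] at h
    linear_combination (1 : ℂ) * h
  have hD : contract2 κ = 2*((κ 0 0)*(κ 1 1) - (κ 0 1)^2) := by
    simp only [contract2, Fin.sum_univ_two, he00, he01, he10, he11, hk10]
    ring
  have hXne : ((κ 0 0)*(κ 1 1) - (κ 0 1)^2) ≠ 0 := by
    intro h0
    exact hκ (by rw [hD, h0, mul_zero])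
  have hX8 : (8*((κ 0 0)*(κ 1 1) - (κ 0 1)^2)^2 : ℂ) ≠ 0 :=
    mul_ne_zero (by norm_num) (pow_ne_zero 2 hXne)
  refine ⟨3*((κ 0 0)^2*Ψ 1 1 1 1 - 4*(κ 0 0)*(κ 0 1)*Ψ 0 1 1 1 + 2*(κ 0 0)*(κ 1 1)*Ψ 0 0 1 1 + 4*(κ 0 1)^2*Ψ 0 0 1 1 - 4*(κ 0 1)*(κ 1 1)*Ψ 0 0 0 1 + (κ 1 1)^2*Ψ 0 0 0 0)/(8*((κ 0 0)*(κ 1 1) - (κ 0 1)^2)^2), ?_⟩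
  intro A B C D
  rw [sym4_eval]
  fin_cases A <;> fin_cases B <;> fin_cases C <;> fin_cases D <;>
    simp only [Fin.mk_zero, Fin.mk_one, Fin.isValue, hk10]
  · rw [div_mul_eq_mul_div, eq_div_iff hX8]
    linear_combination (20*(κ 0 0)*(κ 0 1)*(κ 1 1) + -8*(κ 0 1)*(κ 0 1)*(κ 0 1)) * e0 + (-5*(κ 0 0)*(κ 0 0)*(κ 1 1) + -4*(κ 0 0)*(κ 0 1)*(κ 0 1)) * e1 + (18*(κ 0 0)*(κ 0 0)*(κ 0 1)) * e2 + (-3*(κ 0 0)*(κ 0 0)*(κ 0 0)) * e3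
  · rw [div_mul_eq_mul_div, eq_div_iff hX8]
    linear_combination (8*(κ 0 0)*(κ 1 1)*(κ 1 1) + 4*(κ 0 1)*(κ 0 1)*(κ 1 1)) * e0 + (-5*(κ 0 0)*(κ 0 1)*(κ 1 1) + -4*(κ 0 1)*(κ 0 1)*(κ 0 1)) * e1 + (18*(κ 0 0)*(κ 0 1)*(κ 0 1)) * e2 + (-3*(κ 0 0)*(κ 0 0)*(κ 0 1)) * e3
  · rw [div_mul_eq_mul_div, eq_div_iff hX8]
    linear_combination (8*((κ 0 0)*(κ 1 1) - (κ 0 1)^2)^2) * s0010 + (8*(κ 0 0)*(κ 1 1)*(κ 1 1) + 4*(κ 0 1)*(κ 0 1)*(κ 1 1)) * e0 + (-5*(κ 0 0)*(κ 0 1)*(κ 1 1) + -4*(κ 0 1)*(κ 0 1)*(κ 0 1)) * e1 + (18*(κ 0 0)*(κ 0 1)*(κ 0 1)) * e2 + (-3*(κ 0 0)*(κ 0 0)*(κ 0 1)) * e3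
  · rw [div_mul_eq_mul_div, eq_div_iff hX8]
    linear_combination (12*(κ 0 1)*(κ 1 1)*(κ 1 1)) * e0 + (1*(κ 0 0)*(κ 1 1)*(κ 1 1) + -10*(κ 0 1)*(κ 0 1)*(κ 1 1)) * e1 + (6*(κ 0 0)*(κ 0 1)*(κ 1 1) + 12*(κ 0 1)*(κ 0 1)*(κ 0 1)) * e2 + (-1*(κ 0 0)*(κ 0 0)*(κ 1 1) + -2*(κ 0 0)*(κ 0 1)*(κ 0 1)) * e3
  · rw [div_mul_eq_mul_div, eq_div_iff hX8]
    linear_combination (8*((κ 0 0)*(κ 1 1) - (κ 0 1)^2)^2) * s0100 + (8*(κ 0 0)*(κ 1 1)*(κ 1 1) + 4*(κ 0 1)*(κ 0 1)*(κ 1 1)) * e0 + (-5*(κ 0 0)*(κ 0 1)*(κ 1 1) + -4*(κ 0 1)*(κ 0 1)*(κ 0 1)) * e1 + (18*(κ 0 0)*(κ 0 1)*(κ 0 1)) * e2 + (-3*(κ 0 0)*(κ 0 0)*(κ 0 1)) * e3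
  · rw [div_mul_eq_mul_div, eq_div_iff hX8]
    linear_combination (8*((κ 0 0)*(κ 1 1) - (κ 0 1)^2)^2) * s0101 + (12*(κ 0 1)*(κ 1 1)*(κ 1 1)) * e0 + (1*(κ 0 0)*(κ 1 1)*(κ 1 1) + -10*(κ 0 1)*(κ 0 1)*(κ 1 1)) * e1 + (6*(κ 0 0)*(κ 0 1)*(κ 1 1) + 12*(κ 0 1)*(κ 0 1)*(κ 0 1)) * e2 + (-1*(κ 0 0)*(κ 0 0)*(κ 1 1) + -2*(κ 0 0)*(κ 0 1)*(κ 0 1)) * e3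
  · rw [div_mul_eq_mul_div, eq_div_iff hX8]
    linear_combination (8*((κ 0 0)*(κ 1 1) - (κ 0 1)^2)^2) * s0110 + (12*(κ 0 1)*(κ 1 1)*(κ 1 1)) * e0 + (1*(κ 0 0)*(κ 1 1)*(κ 1 1) + -10*(κ 0 1)*(κ 0 1)*(κ 1 1)) * e1 + (6*(κ 0 0)*(κ 0 1)*(κ 1 1) + 12*(κ 0 1)*(κ 0 1)*(κ 0 1)) * e2 + (-1*(κ 0 0)*(κ 0 0)*(κ 1 1) + -2*(κ 0 0)*(κ 0 1)*(κ 0 1)) * e3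
  · rw [div_mul_eq_mul_div, eq_div_iff hX8]
    linear_combination (8*(κ 1 1)*(κ 1 1)*(κ 1 1)) * e0 + (-5*(κ 0 1)*(κ 1 1)*(κ 1 1)) * e1 + (8*(κ 0 0)*(κ 1 1)*(κ 1 1) + -2*(κ 0 1)*(κ 0 1)*(κ 1 1)) * e2 + (-3*(κ 0 0)*(κ 0 1)*(κ 1 1) + 4*(κ 0 1)*(κ 0 1)*(κ 0 1)) * e3 + (-4*(κ 0 0)*(κ 0 1)*(κ 0 1)) * e4
  · rw [div_mul_eq_mul_div, eq_div_iff hX8]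
    linear_combination (8*((κ 0 0)*(κ 1 1) - (κ 0 1)^2)^2) * s1000 + (8*(κ 0 0)*(κ 1 1)*(κ 1 1) + 4*(κ 0 1)*(κ 0 1)*(κ 1 1)) * e0 + (-5*(κ 0 0)*(κ 0 1)*(κ 1 1) + -4*(κ 0 1)*(κ 0 1)*(κ 0 1)) * e1 + (18*(κ 0 0)*(κ 0 1)*(κ 0 1)) * e2 + (-3*(κ 0 0)*(κ 0 0)*(κ 0 1)) * e3
  · rw [div_mul_eq_mul_div, eq_div_iff hX8]
    linear_combination (8*((κ 0 0)*(κ 1 1) - (κ 0 1)^2)^2) * s1001 + (12*(κ 0 1)*(κ 1 1)*(κ 1 1)) * e0 + (1*(κ 0 0)*(κ 1 1)*(κ 1 1) + -10*(κ 0 1)*(κ 0 1)*(κ 1 1)) * e1 + (6*(κ 0 0)*(κ 0 1)*(κ 1 1) + 12*(κ 0 1)*(κ 0 1)*(κ 0 1)) * e2 + (-1*(κ 0 0)*(κ 0 0)*(κ 1 1) + -2*(κ 0 0)*(κ 0 1)*(κ 0 1)) * e3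
  · rw [div_mul_eq_mul_div, eq_div_iff hX8]
    linear_combination (8*((κ 0 0)*(κ 1 1) - (κ 0 1)^2)^2) * s1010 + (12*(κ 0 1)*(κ 1 1)*(κ 1 1)) * e0 + (1*(κ 0 0)*(κ 1 1)*(κ 1 1) + -10*(κ 0 1)*(κ 0 1)*(κ 1 1)) * e1 + (6*(κ 0 0)*(κ 0 1)*(κ 1 1) + 12*(κ 0 1)*(κ 0 1)*(κ 0 1)) * e2 + (-1*(κ 0 0)*(κ 0 0)*(κ 1 1) + -2*(κ 0 0)*(κ 0 1)*(κ 0 1)) * e3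
  · rw [div_mul_eq_mul_div, eq_div_iff hX8]
    linear_combination (8*((κ 0 0)*(κ 1 1) - (κ 0 1)^2)^2) * s1011 + (8*(κ 1 1)*(κ 1 1)*(κ 1 1)) * e0 + (-5*(κ 0 1)*(κ 1 1)*(κ 1 1)) * e1 + (8*(κ 0 0)*(κ 1 1)*(κ 1 1) + -2*(κ 0 1)*(κ 0 1)*(κ 1 1)) * e2 + (-3*(κ 0 0)*(κ 0 1)*(κ 1 1) + 4*(κ 0 1)*(κ 0 1)*(κ 0 1)) * e3 + (-4*(κ 0 0)*(κ 0 1)*(κ 0 1)) * e4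
  · rw [div_mul_eq_mul_div, eq_div_iff hX8]
    linear_combination (8*((κ 0 0)*(κ 1 1) - (κ 0 1)^2)^2) * s1100 + (12*(κ 0 1)*(κ 1 1)*(κ 1 1)) * e0 + (1*(κ 0 0)*(κ 1 1)*(κ 1 1) + -10*(κ 0 1)*(κ 0 1)*(κ 1 1)) * e1 + (6*(κ 0 0)*(κ 0 1)*(κ 1 1) + 12*(κ 0 1)*(κ 0 1)*(κ 0 1)) * e2 + (-1*(κ 0 0)*(κ 0 0)*(κ 1 1) + -2*(κ 0 0)*(κ 0 1)*(κ 0 1)) * e3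
  · rw [div_mul_eq_mul_div, eq_div_iff hX8]
    linear_combination (8*((κ 0 0)*(κ 1 1) - (κ 0 1)^2)^2) * s1101 + (8*(κ 1 1)*(κ 1 1)*(κ 1 1)) * e0 + (-5*(κ 0 1)*(κ 1 1)*(κ 1 1)) * e1 + (8*(κ 0 0)*(κ 1 1)*(κ 1 1) + -2*(κ 0 1)*(κ 0 1)*(κ 1 1)) * e2 + (-3*(κ 0 0)*(κ 0 1)*(κ 1 1) + 4*(κ 0 1)*(κ 0 1)*(κ 0 1)) * e3 + (-4*(κ 0 0)*(κ 0 1)*(κ 0 1)) * e4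
  · rw [div_mul_eq_mul_div, eq_div_iff hX8]
    linear_combination (8*((κ 0 0)*(κ 1 1) - (κ 0 1)^2)^2) * s1110 + (8*(κ 1 1)*(κ 1 1)*(κ 1 1)) * e0 + (-5*(κ 0 1)*(κ 1 1)*(κ 1 1)) * e1 + (8*(κ 0 0)*(κ 1 1)*(κ 1 1) + -2*(κ 0 1)*(κ 0 1)*(κ 1 1)) * e2 + (-3*(κ 0 0)*(κ 0 1)*(κ 1 1) + 4*(κ 0 1)*(κ 0 1)*(κ 0 1)) * e3 + (-4*(κ 0 0)*(κ 0 1)*(κ 0 1)) * e4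
  · rw [div_mul_eq_mul_div, eq_div_iff hX8]
    linear_combination (3*(κ 1 1)*(κ 1 1)*(κ 1 1)) * e1 + (-18*(κ 0 1)*(κ 1 1)*(κ 1 1)) * e2 + (5*(κ 0 0)*(κ 1 1)*(κ 1 1) + 4*(κ 0 1)*(κ 0 1)*(κ 1 1)) * e3 + (-20*(κ 0 0)*(κ 0 1)*(κ 1 1) + 8*(κ 0 1)*(κ 0 1)*(κ 0 1)) * e4
end
end

section
/- Let (o,ι) be a dyad with o_Aι^A = 1 on a 2-dimensional complex symplectic space, and define U_{AA'BB'} := ε̄_{A'B'} o_{(A}ι_{B)}. Then for a type-D Weyl spinor Ψ_{ABCD} = Ψ·o_{(A}o_B ι_C ι_{D)} with self-dual Weyl tensor 𝒞_{AA'BB'CC'DD'} := Ψ_{ABCD} ε̄_{A'B'} ε̄_{C'D'}, the tensor 𝒬 := 𝒞 − (Ψ/12)(g_{ac}g_{bd} − g_{ad}g_{bc} + i ε_{abcd}) satisfies 𝒬_{AA'BB'CC'DD'} = Ψ · U_{AA'BB'} U_{CC'DD'}. -/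
open Complex Finset

noncomputable section

/-- The metric g_{ab} = ε_{AB}ε̄_{A'B'} in spinor components. -/
def gsp (A A' B B' : Fin 2) : ℂ := eps A B * eps A' B'

/-- The spacetime volume form
ε_{abcd} = i(ε_{AC}ε_{BD}ε̄_{A'D'}ε̄_{B'C'} − ε_{AD}ε_{BC}ε̄_{A'C'}ε̄_{B'D'}). -/
def vol4 (A A' B B' C C' D D' : Fin 2) : ℂ :=
  Complex.I * (eps A C * eps B D * eps A' D' * eps B' C'
    - eps A D * eps B C * eps A' C' * eps B' D')

/-- The bivector U_{AA'BB'} = ε̄_{A'B'} o_{(A}ι_{B)}. -/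
def Usp (o ι : Fin 2 → ℂ) (A A' B B' : Fin 2) : ℂ := eps A' B' * kappaSym o ι A B


set_option maxHeartbeats 1000000 in
theorem perm4_sum (T : Fin 4 → Fin 4 → Fin 4 → Fin 4 → ℂ) :
    ∑ σ : Equiv.Perm (Fin 4), T (σ 0) (σ 1) (σ 2) (σ 3) =
      T 0 1 2 3 + T 0 1 3 2 + T 0 2 1 3 + T 0 2 3 1 + T 0 3 1 2 + T 0 3 2 1
    + T 1 0 2 3 + T 1 0 3 2 + T 1 2 0 3 + T 1 2 3 0 + T 1 3 0 2 + T 1 3 2 0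
    + T 2 0 1 3 + T 2 0 3 1 + T 2 1 0 3 + T 2 1 3 0 + T 2 3 0 1 + T 2 3 1 0
    + T 3 0 1 2 + T 3 0 2 1 + T 3 1 0 2 + T 3 1 2 0 + T 3 2 0 1 + T 3 2 1 0 := by
  have h1 : (1:Fin 4) = (0:Fin 3).succ := rfl
  have h2 : (2:Fin 4) = (1:Fin 3).succ := rfl
  have h3 : (3:Fin 4) = (2:Fin 3).succ := rfl
  have g1 : (1:Fin 3) = (0:Fin 2).succ := rfl
  have g2 : (2:Fin 3) = (1:Fin 2).succ := rfl
  have k1 : (1:Fin 2) = (0:Fin 1).succ := rfl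
  simp only [Finset.univ_perm_fin_succ, Finset.sum_map, Fintype.sum_prod_type,
    Equiv.coe_toEmbedding, h1, h2, h3, g1, g2, k1,
    Equiv.Perm.decomposeFin_symm_apply_zero, Equiv.Perm.decomposeFin_symm_apply_succ,
    Fin.sum_univ_four, Fin.sum_univ_three, Fin.sum_univ_two, Finset.univ_unique,
    Finset.sum_singleton]
  simp (config := { decide := true }) [Equiv.swap_apply_def]
  ring

theorem typeD_eval (Ψ : ℂ) (o ι : Fin 2 → ℂ) (A B C D : Fin 2) :
    typeD Ψ o ι A B C D = Ψ/6 * (o A*o B*ι C*ι D + o A*ι B*o C*ι D + o A*ι B*ι C*o D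
      + ι A*o B*o C*ι D + ι A*o B*ι C*o D + ι A*ι B*o C*o D) := by
  have := perm4_sum (fun i j k l =>
    Ψ * (o (![A,B,C,D] i) * o (![A,B,C,D] j) * ι (![A,B,C,D] k) * ι (![A,B,C,D] l)))
  simp only [typeD, sym4]
  rw [this]
  simp only [Matrix.cons_val_zero, Matrix.cons_val_one, Matrix.head_cons,
    Matrix.cons_val_two, Matrix.tail_cons, Matrix.cons_val_three]
  ring

lemma I_vol4 (A A' B B' C C' D D' : Fin 2) :
    Complex.I * vol4 A A' B B' C C' D D'
      = -(eps A C * eps B D * eps A' D' * eps B' C')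
        + eps A D * eps B C * eps A' C' * eps B' D' := by
  rw [vol4, ← mul_assoc, Complex.I_mul_I]; ring

set_option maxHeartbeats 4000000 in
theorem key_hom (o ι : Fin 2 → ℂ) (Ψ : ℂ) (A A' B B' C C' D D' : Fin 2) :
    typeD Ψ o ι A B C D * eps A' B' * eps C' D'
      - (Ψ / 12) * (gsp A A' C C' * gsp B B' D D' - gsp A A' D D' * gsp B B' C C'
          + Complex.I * vol4 A A' B B' C C' D D') * (o 0 * ι 1 - o 1 * ι 0)^2
    = Ψ * Usp o ι A A' B B' * Usp o ι C C' D D' := by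
  rw [typeD_eval, I_vol4]
  fin_cases A <;> fin_cases A' <;> fin_cases B <;> fin_cases B' <;>
    fin_cases C <;> fin_cases C' <;> fin_cases D <;> fin_cases D' <;>
    · simp (config := {decide := true}) only [gsp, vol4, Usp, kappaSym, eps,
        Fin.isValue, Fin.mk_zero, Fin.mk_one, if_true, if_false]
      ring

/-- For a type-D Weyl spinor with self-dual Weyl tensor 𝒞 = Ψ_{ABCD}ε̄_{A'B'}ε̄_{C'D'},
the tensor 𝒬 = 𝒞 − (Ψ/12)(g_{ac}g_{bd} − g_{ad}g_{bc} + iε_{abcd}) factorizes as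
𝒬 = Ψ·U_{ab}U_{cd}. -/
theorem Q_eq_Psi_UU (o ι : Fin 2 → ℂ) (hd : isDyad o ι) (Ψ : ℂ) (hΨ : Ψ ≠ 0) :
    ∀ A A' B B' C C' D D' : Fin 2,
      typeD Ψ o ι A B C D * eps A' B' * eps C' D'
        - (Ψ / 12) * (gsp A A' C C' * gsp B B' D D' - gsp A A' D D' * gsp B B' C C'
            + Complex.I * vol4 A A' B B' C C' D D')
      = Ψ * Usp o ι A A' B B' * Usp o ι C C' D D' := by
  intro A A' B B' C C' D D'
  have hδ : o 0 * ι 1 - o 1 * ι 0 = 1 := by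
    have h := hd
    simp [isDyad, Fin.sum_univ_two, eps] at h
    linear_combination h
  have k := key_hom o ι Ψ A A' B B' C C' D D'
  linear_combination k + (Ψ / 12) * (gsp A A' C C' * gsp B B' D D'
      - gsp A A' D D' * gsp B B' C C'
      + Complex.I * vol4 A A' B B' C C' D D') * (o 0 * ι 1 - o 1 * ι 0 + 1) * hδ
end
end
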